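/- Fix γ ≥ 3 and let M(n,γ) denote the maximum, over graphs G on n vertices with γ(G) = γ, of the number of dominating sets of size γ. Then C(n,γ) − O(log^γ n · n^{γ−1/(γ−1)}) ≤ M(n,γ) ≤ C(n,γ) − Ω(n^{γ−1−1/(γ−1)}). -/

import Mathlib

open Filter

def Dominates {V : Type*} (G : SimpleGraph V) (S : Finset V) : Prop :=
  ∀ v ∉ S, ∃ u ∈ S, G.Adj u v

noncomputable def domCount {V : Type*} [Fintype V] (G : SimpleGraph V) (k : ℕ) : ℕ :=
  letI : DecidablePred (fun S : Finset V => Dominates G S) := Classical.decPred _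
  ((Finset.powersetCard k Finset.univ).filter (fun S => Dominates G S)).card

noncomputable def domNum {V : Type*} [Fintype V] (G : SimpleGraph V) : ℕ :=
  sInf {k | ∃ S : Finset V, S.card = k ∧ Dominates G S}

/-!
Upper bound: if `γ(G) = γ`, every `(γ - 1)`-set misses some vertex, i.e. lies in the
non-neighbourhood of that vertex. Counting `(γ - 1)`-sets shows that some vertex `v` has
`d ≳ n ^ (1 - 1 / (γ - 1))` non-neighbours, and none of the `C(d, γ)` `γ`-subsets of its
non-neighbourhood dominates `v`.

Lower bound, by an explicit construction instead of the paper's random one (so no logarithmic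
factor is lost): with `t = γ - 1` and `m ≈ n ^ (1 / t)`, label each vertex by its last `t`
digits in base `m` and join two vertices when all `t` digits differ. No `t`-set `S` dominates
(take a vertex whose `i`-th digit is that of the `i`-th element of `S`), the `t + 1` vertices
with constant labels `0, …, t` dominate by pigeonhole, and every vertex has only `O(n / m)`
non-neighbours, so at most `n · O(n / m) ^ γ = O(n ^ (γ - 1 / (γ - 1)))` of the `γ`-sets fail
to dominate.
-/

open Finset

section Domination

variable {V : Type*} [Fintype V] (G : SimpleGraph V)

open Classical in
noncomputable def nonDomCount (k : ℕ) : ℕ :=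
  #{S ∈ powersetCard k (univ : Finset V) | ¬Dominates G S}

theorem domCount_add_nonDomCount (k : ℕ) :
    domCount G k + nonDomCount G k = (Fintype.card V).choose k := by
  classical
  rw [domCount, nonDomCount, ← card_univ, ← card_powersetCard]
  convert card_filter_add_card_filter_not (s := powersetCard k univ) (Dominates G)

theorem not_dominates_of_card_lt_domNum {S : Finset V} (h : #S < domNum G) :
    ¬Dominates G S :=
  fun hS => h.not_ge (Nat.sInf_le ⟨S, rfl, hS⟩)

theorem domCount_le_choose (k : ℕ) :
    domCount G k ≤ (Fintype.card V).choose k :=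
  (domCount_add_nonDomCount G k).symm ▸ Nat.le_add_right _ _

variable [DecidableEq V] [DecidableRel G.Adj]

theorem not_dominates_iff_exists_subset_neighborFinset_compl {S : Finset V} :
    ¬Dominates G S ↔ ∃ v ∉ S, S ⊆ Gᶜ.neighborFinset v := by
  simp only [Dominates, not_forall, not_exists, not_and, subset_iff,
    SimpleGraph.mem_neighborFinset, SimpleGraph.compl_adj, exists_prop]
  refine exists_congr fun v => and_congr_right fun hv => forall₂_congr fun u hu => ?_
  exact ⟨fun h => ⟨(ne_of_mem_of_not_mem hu hv).symm, fun h' => h h'.symm⟩,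
    fun h h' => h.2 h'.symm⟩

theorem nonDomCount_le (k : ℕ) :
    nonDomCount G k ≤ Fintype.card V * Gᶜ.maxDegree.choose k := by
  classical
  have hsub : {S ∈ powersetCard k (univ : Finset V) | ¬Dominates G S} ⊆
      univ.biUnion fun v => powersetCard k (Gᶜ.neighborFinset v) := by
    intro S hS
    obtain ⟨hSk, hS⟩ := mem_filter.mp hS
    obtain ⟨v, -, hv⟩ := (not_dominates_iff_exists_subset_neighborFinset_compl G).mp hS
    exact mem_biUnion.mpr
      ⟨v, mem_univ v, mem_powersetCard.mpr ⟨hv, (mem_powersetCard.mp hSk).2⟩⟩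
  calc nonDomCount G k
      ≤ ∑ v, #(powersetCard k (Gᶜ.neighborFinset v)) := by
        rw [nonDomCount]; convert (card_le_card hsub).trans card_biUnion_le
    _ ≤ ∑ _v : V, Gᶜ.maxDegree.choose k := by
        gcongr with v
        rw [card_powersetCard, SimpleGraph.card_neighborFinset_eq_degree]
        exact Nat.choose_le_choose k (Gᶜ.degree_le_maxDegree v)
    _ = Fintype.card V * Gᶜ.maxDegree.choose k := by rw [sum_const, card_univ, smul_eq_mul]

theorem choose_maxDegree_compl_le_nonDomCount [Nonempty V] (k : ℕ) :
    Gᶜ.maxDegree.choose k ≤ nonDomCount G k := by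
  classical
  obtain ⟨v, hv⟩ := Gᶜ.exists_maximal_degree_vertex
  rw [hv, ← SimpleGraph.card_neighborFinset_eq_degree, ← card_powersetCard, nonDomCount]
  refine card_le_card fun S hS => ?_
  obtain ⟨hSv, hSk⟩ := mem_powersetCard.mp hS
  refine mem_filter.mpr ⟨mem_powersetCard.mpr ⟨subset_univ S, hSk⟩, ?_⟩
  refine (not_dominates_iff_exists_subset_neighborFinset_compl G).mpr ⟨v, fun hvS => ?_, hSv⟩
  simpa using hSv hvS

theorem choose_le_domCount_add_card_mul_choose (k : ℕ) :
    (Fintype.card V).choose k ≤ domCount G k + Fintype.card V * Gᶜ.maxDegree.choose k := by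
  rw [← domCount_add_nonDomCount]
  exact Nat.add_le_add_left (nonDomCount_le G k) _

theorem choose_le_card_mul_choose_of_lt_domNum {k : ℕ} (hk : k < domNum G) :
    (Fintype.card V).choose k ≤ Fintype.card V * Gᶜ.maxDegree.choose k := by
  have hzero : domCount G k = 0 := by
    classical
    rw [domCount, card_eq_zero, filter_eq_empty_iff]
    intro S hS
    exact not_dominates_of_card_lt_domNum G ((mem_powersetCard.mp hS).2 ▸ hk)
  simpa [hzero] using choose_le_domCount_add_card_mul_choose G k

theorem domCount_add_choose_le [Nonempty V] (k : ℕ) :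
    domCount G k + Gᶜ.maxDegree.choose k ≤ (Fintype.card V).choose k := by
  rw [← domCount_add_nonDomCount]
  exact Nat.add_le_add_left (choose_maxDegree_compl_le_nonDomCount G k) _

end Domination

section CoordGraph

variable {V ι α : Type*} [Nonempty ι]

def coordGraph (e : V → ι → α) : SimpleGraph V where
  Adj u v := ∀ i, e u i ≠ e v i
  symm := ⟨fun _ _ h i => (h i).symm⟩
  loopless := ⟨fun _ h => h (Classical.arbitrary ι) rfl⟩

variable (e : V → ι → α)

@[simp]
theorem coordGraph_adj {u v : V} : (coordGraph e).Adj u v ↔ ∀ i, e u i ≠ e v i := Iff.rfl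

variable [Fintype ι]

instance [DecidableEq α] : DecidableRel (coordGraph e).Adj :=
  fun u v => inferInstanceAs (Decidable (∀ i, e u i ≠ e v i))

theorem exists_dominates_coordGraph [Fintype α] (hα : Fintype.card ι < Fintype.card α)
    (he : Function.Surjective e) :
    ∃ S : Finset V, #S = Fintype.card ι + 1 ∧ Dominates (coordGraph e) S := by
  classical
  obtain ⟨A, -, hA⟩ : ∃ A ⊆ (univ : Finset α), #A = Fintype.card ι + 1 :=
    exists_subset_card_eq (by rw [card_univ]; exact hα)
  set w : α → V := fun a => Function.surjInv he fun _ => a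
  have hw : ∀ a i, e (w a) i = a := fun a i => congrFun (Function.surjInv_eq he _) i
  refine ⟨A.image w, ?_, fun v hv => ?_⟩
  · rw [card_image_of_injective _ fun a b hab => by
      simpa [hw] using congrArg (e · (Classical.arbitrary ι)) hab, hA]
  by_contra! hnadj
  -- every `a ∈ A` is a coordinate of `v`, and `v` has only `card ι` coordinates
  have hAv : A ⊆ univ.image (e v) := fun a ha => by
    obtain ⟨i, hi⟩ : ∃ i, a = e v i := by simpa [hw] using hnadj (w a) (mem_image_of_mem w ha)
    exact hi ▸ mem_image_of_mem _ (mem_univ i)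
  have := (card_le_card hAv).trans card_image_le
  rw [card_univ] at this
  omega

variable [Fintype V] [DecidableEq α]

theorem not_dominates_coordGraph [Nonempty α] (hfib : ∀ x, Fintype.card ι < #{v | e v = x})
    {S : Finset V} (hS : #S ≤ Fintype.card ι) : ¬Dominates (coordGraph e) S := by
  obtain ⟨j⟩ := Function.Embedding.nonempty_of_card_le (α := S) (β := ι) (by simpa using hS)
  -- `x` agrees with each `s ∈ S` in coordinate `j s`, so no vertex labelled `x`
  -- is adjacent to `s`
  set x := Function.extend j (fun s : S => e s (j s)) fun _ => Classical.arbitrary α with hx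
  obtain ⟨v, hv, hvS⟩ := exists_mem_notMem_of_card_lt_card (hS.trans_lt (hfib x))
  intro hdom
  obtain ⟨u, hu, hadj⟩ := hdom v hvS
  apply (coordGraph_adj e).mp hadj (j ⟨u, hu⟩)
  rw [(mem_filter.mp hv).2, hx, j.injective.extend_apply]

theorem domNum_coordGraph [Fintype α] (hα : Fintype.card ι < Fintype.card α)
    (hfib : ∀ x, Fintype.card ι < #{v | e v = x}) :
    domNum (coordGraph e) = Fintype.card ι + 1 := by
  have : Nonempty α := Fintype.card_pos_iff.mp (by omega)
  have he : Function.Surjective e := fun x => by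
    obtain ⟨v, hv⟩ := card_pos.mp ((Nat.zero_le _).trans_lt (hfib x))
    exact ⟨v, (mem_filter.mp hv).2⟩
  obtain ⟨S, hS, hdom⟩ := exists_dominates_coordGraph e hα he
  refine le_antisymm (Nat.sInf_le ⟨S, hS, hdom⟩) (le_csInf ⟨_, S, hS, hdom⟩ ?_)
  rintro k ⟨T, rfl, hT⟩
  by_contra! hk
  exact not_dominates_coordGraph e hfib (Nat.lt_succ_iff.mp hk) hT

omit [Nonempty ι] in
theorem card_filter_apply_eq_le [Fintype α] {U : ℕ} (hU : ∀ x, #{v | e v = x} ≤ U)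
    (i : ι) (a : α) : #{v | e v i = a} ≤ Fintype.card α ^ (Fintype.card ι - 1) * U := by
  classical
  calc #{v | e v i = a}
      = ∑ x ∈ {x : ι → α | x i = a}, #{v ∈ {v | e v i = a} | e v = x} :=
        card_eq_sum_card_fiberwise fun v hv => by simpa using hv
    _ ≤ ∑ _x ∈ {x : ι → α | x i = a}, U := sum_le_sum fun x hx => by
        refine (card_le_card fun v hv => ?_).trans (hU x)
        simp_all
    _ = Fintype.card α ^ (Fintype.card ι - 1) * U := by
        rw [sum_const, smul_eq_mul, ← Fintype.piFinset_univ,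
          Fintype.card_filter_piFinset_const]
        simp

variable [DecidableEq V]

theorem degree_compl_coordGraph_le (v : V) :
    (coordGraph e)ᶜ.degree v ≤ ∑ i, #{u | e u i = e v i} := by
  rw [← SimpleGraph.card_neighborFinset_eq_degree]
  refine (card_le_card fun u hu => ?_).trans card_biUnion_le
  simp only [SimpleGraph.mem_neighborFinset, SimpleGraph.compl_adj, coordGraph_adj,
    not_forall, not_not] at hu
  obtain ⟨i, hi⟩ := hu.2
  exact mem_biUnion.mpr ⟨i, mem_univ i, mem_filter.mpr ⟨mem_univ u, hi.symm⟩⟩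

theorem maxDegree_compl_coordGraph_le [Fintype α] {U : ℕ} (hU : ∀ x, #{v | e v = x} ≤ U) :
    (coordGraph e)ᶜ.maxDegree ≤
      Fintype.card ι * (Fintype.card α ^ (Fintype.card ι - 1) * U) := by
  refine SimpleGraph.maxDegree_le_of_forall_degree_le _ _ fun v => ?_
  refine (degree_compl_coordGraph_le e v).trans ?_
  simpa using sum_le_sum fun i (_ : i ∈ univ) => card_filter_apply_eq_le e hU i (e v i)

end CoordGraph

theorem card_filter_fin_mod_eq {n q r : ℕ} (hr : r < q) :
    #{x : Fin n | (x : ℕ) % q = r} = n / q + if r < n % q then 1 else 0 := by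
  have h := Nat.count_modEq_card n (r.zero_le.trans_lt hr) r
  rw [Nat.mod_eq_of_lt hr, Nat.count_eq_card_filter_range] at h
  rw [← h, ← card_map Fin.valEmbedding, map_filter', Fin.map_valEmbedding_univ]
  congr 1
  ext x
  simp +contextual [Nat.ModEq, Nat.mod_eq_of_lt hr, Fin.exists_iff]

section BaseDigits

variable {n t m : ℕ} [NeZero m]

def baseDigits (n t m : ℕ) [NeZero m] (x : Fin n) : Fin t → Fin m :=
  finFunctionFinEquiv.symm (Fin.ofNat (m ^ t) x)

theorem card_baseDigits_fiber (y : Fin t → Fin m) :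
    #{x | baseDigits n t m x = y} =
      n / m ^ t + if (finFunctionFinEquiv y : ℕ) < n % m ^ t then 1 else 0 := by
  rw [← card_filter_fin_mod_eq (finFunctionFinEquiv y).isLt]
  congr 1
  ext x
  simp [baseDigits, Equiv.symm_apply_eq, Fin.ext_iff]

theorem exists_graph_choose_le_domCount_add (ht : 1 ≤ t) (hm : t + 1 ≤ m)
    (hn : (t + 1) * m ^ t ≤ n) :
    ∃ G : SimpleGraph (Fin n), domNum G = t + 1 ∧
      n.choose (t + 1) ≤ domCount G (t + 1) + n * (2 * t * (n / m)) ^ (t + 1) := by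
  have : Nonempty (Fin t) := ⟨⟨0, ht⟩⟩
  have hm0 : 0 < m := NeZero.pos m
  set e := baseDigits n t m
  have hfib_ge : ∀ y, n / m ^ t ≤ #{x | e x = y} := fun y => by
    rw [card_baseDigits_fiber]; exact Nat.le_add_right _ _
  have hfib_le : ∀ y, #{x | e x = y} ≤ n / m ^ t + 1 := fun y => by
    rw [card_baseDigits_fiber]; split_ifs <;> simp
  have hfib_big : t + 1 ≤ n / m ^ t := (Nat.le_div_iff_mul_le (by positivity)).mpr hn
  refine ⟨coordGraph e, ?_, ?_⟩
  · simpa using domNum_coordGraph e (by simpa using hm)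
      fun y => by simpa using hfib_big.trans (hfib_ge y)
  · have hmt : m ^ (t - 1) * m = m ^ t := by rw [← pow_succ, Nat.sub_add_cancel ht]
    have hΔ : (coordGraph e)ᶜ.maxDegree ≤ 2 * t * (n / m) := by
      have h1 : m ^ (t - 1) * (n / m ^ t) ≤ n / m := (Nat.le_div_iff_mul_le hm0).mpr <| by
        rw [mul_right_comm, hmt]; exact Nat.mul_div_le n _
      have h2 : m ^ (t - 1) ≤ n / m := (Nat.le_div_iff_mul_le hm0).mpr <| by
        rw [hmt]; exact le_trans (Nat.le_mul_of_pos_left _ (by omega)) hn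
      calc (coordGraph e)ᶜ.maxDegree ≤ t * (m ^ (t - 1) * (n / m ^ t + 1)) := by
            simpa using maxDegree_compl_coordGraph_le e hfib_le
        _ ≤ 2 * t * (n / m) := by rw [mul_add_one]; nlinarith
    calc n.choose (t + 1)
        ≤ domCount (coordGraph e) (t + 1) + n * (coordGraph e)ᶜ.maxDegree.choose (t + 1) := by
          simpa using choose_le_domCount_add_card_mul_choose (coordGraph e) (t + 1)
      _ ≤ domCount (coordGraph e) (t + 1) + n * (2 * t * (n / m)) ^ (t + 1) := by
          gcongr
          exact (Nat.choose_le_pow _ _).trans (Nat.pow_le_pow_left hΔ _)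

end BaseDigits

section Asymptotics

open Nat in
theorem div_two_pow_div_factorial_le_choose {d k : ℕ} (h : 2 * k ≤ d) :
    ((d : ℝ) / 2) ^ k / k ! ≤ d.choose k := by
  refine le_trans ?_ (Nat.pow_le_choose k d)
  gcongr
  rw [Nat.cast_sub (by omega)]
  have : (2 * k : ℝ) ≤ d := by exact_mod_cast h
  push_cast
  linarith

theorem rpow_one_sub_inv_pow {x : ℝ} (hx : 0 ≤ x) (t k : ℕ) :
    (x ^ (1 - 1 / (t : ℝ))) ^ k = x ^ ((k : ℝ) - k / t) := by
  rw [← Real.rpow_natCast, ← Real.rpow_mul hx]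
  ring_nf

open Nat in
theorem rpow_le_two_mul_of_choose_le {n t d : ℕ} (ht : 1 ≤ t) (hn : 2 * t ≤ n)
    (h : n.choose t ≤ n * d.choose t) : (n : ℝ) ^ (1 - 1 / (t : ℝ)) ≤ 2 * d := by
  have hn0 : (0 : ℝ) < n := by exact_mod_cast (by omega : 0 < n)
  have hchoose : ((n : ℝ) / 2) ^ t / t ! ≤ n * ((d : ℝ) ^ t / t !) :=
    calc ((n : ℝ) / 2) ^ t / t ! ≤ n.choose t := div_two_pow_div_factorial_le_choose hn
      _ ≤ n * d.choose t := by exact_mod_cast h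
      _ ≤ n * ((d : ℝ) ^ t / t !) := by gcongr; exact Nat.choose_le_pow_div t d
  rw [mul_div_assoc', div_le_div_iff_of_pos_right (by positivity), div_pow] at hchoose
  refine (pow_le_pow_iff_left₀ (by positivity) (by positivity) (by omega : t ≠ 0)).mp ?_
  rw [rpow_one_sub_inv_pow hn0.le, div_self (by positivity), Real.rpow_sub_one hn0.ne',
    Real.rpow_natCast, div_le_iff₀ hn0, mul_pow]
  rw [div_le_iff₀ (by positivity)] at hchoose
  linarith

open Nat in
theorem exists_pos_eventually_rpow_le_choose {t : ℕ} (ht : 2 ≤ t) :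
    ∃ c > 0, ∀ᶠ n : ℕ in atTop, ∀ d : ℕ, n.choose t ≤ n * d.choose t →
      c * (n : ℝ) ^ ((t : ℝ) - 1 / t) ≤ d.choose (t + 1) := by
  have htR : (2 : ℝ) ≤ t := by exact_mod_cast ht
  have hexp : (0 : ℝ) < 1 - 1 / t := by
    rw [sub_pos, div_lt_one (by positivity)]; linarith
  refine ⟨1 / (4 ^ (t + 1) * (t + 1)!), by positivity, ?_⟩
  filter_upwards [eventually_ge_atTop (2 * t), ((tendsto_rpow_atTop hexp).comp
    tendsto_natCast_atTop_atTop).eventually_ge_atTop (4 * (t + 1))] with n hn hlarge d hd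
  set x := (n : ℝ) ^ (1 - 1 / (t : ℝ))
  have hx : x ≤ 2 * d := rpow_le_two_mul_of_choose_le (by omega) hn hd
  have hd_large : 2 * (t + 1) ≤ d := by
    have : (2 * (t + 1) : ℝ) ≤ d := by simp only [Function.comp_apply] at hlarge; linarith
    exact_mod_cast this
  have hxpow : x ^ (t + 1) = (n : ℝ) ^ ((t : ℝ) - 1 / t) := by
    rw [rpow_one_sub_inv_pow (Nat.cast_nonneg n)]
    congr 1
    field_simp
    push_cast
    ring
  calc 1 / (4 ^ (t + 1) * (t + 1)!) * (n : ℝ) ^ ((t : ℝ) - 1 / t)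
      = (x / 4) ^ (t + 1) / (t + 1)! := by rw [← hxpow, div_pow]; field_simp
    _ ≤ ((d : ℝ) / 2) ^ (t + 1) / (t + 1)! := by
        gcongr ?_ ^ _ / _
        linarith
    _ ≤ d.choose (t + 1) := div_two_pow_div_factorial_le_choose hd_large

theorem eventually_exists_mul_pow_le_and_div_le_rpow {t : ℕ} (ht : 1 ≤ t) :
    ∀ᶠ n : ℕ in atTop, ∃ m : ℕ, t + 1 ≤ m ∧ (t + 1) * m ^ t ≤ n ∧
      (n : ℝ) / m ≤ 2 * (t + 1) * (n : ℝ) ^ (1 - 1 / (t : ℝ)) := by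
  have htR : (1 : ℝ) ≤ t := by exact_mod_cast ht
  filter_upwards [eventually_ge_atTop 1,
    ((tendsto_rpow_atTop (by positivity : (0 : ℝ) < 1 / t)).comp
      tendsto_natCast_atTop_atTop).eventually_ge_atTop (((t : ℝ) + 1) ^ 2)] with n hn1 hlarge
  simp only [Function.comp_apply] at hlarge
  have hn0 : (0 : ℝ) < n := by exact_mod_cast hn1
  set z := (n : ℝ) ^ (1 / (t : ℝ))
  have hz : 0 ≤ z := Real.rpow_nonneg hn0.le _
  refine ⟨⌊z / (t + 1)⌋₊, ?_, ?_, ?_⟩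
  · refine Nat.le_floor ?_
    rw [le_div_iff₀ (by positivity)]
    push_cast
    nlinarith
  · have hmz : ((t : ℝ) + 1) * ⌊z / (t + 1)⌋₊ ≤ z := by
      rw [← le_div_iff₀' (by positivity)]; exact Nat.floor_le (by positivity)
    have hzt : z ^ t = n := by
      rw [← Real.rpow_natCast, ← Real.rpow_mul hn0.le, one_div_mul_cancel (by positivity),
        Real.rpow_one]
    suffices h : ((t : ℝ) + 1) * (⌊z / (t + 1)⌋₊ : ℝ) ^ t ≤ n by exact_mod_cast h
    calc ((t : ℝ) + 1) * (⌊z / (t + 1)⌋₊ : ℝ) ^ t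
        ≤ ((t : ℝ) + 1) ^ t * (⌊z / (t + 1)⌋₊ : ℝ) ^ t := by
          gcongr; exact le_self_pow₀ (by linarith) (by omega)
      _ ≤ z ^ t := by rw [← mul_pow]; gcongr
      _ = n := hzt
  · have hm : z / (t + 1) < ⌊z / (t + 1)⌋₊ + 1 := Nat.lt_floor_add_one _
    have hm1 : (1 : ℝ) ≤ ⌊z / (t + 1)⌋₊ := by
      exact_mod_cast Nat.le_floor (by rw [le_div_iff₀ (by positivity)]; push_cast; nlinarith)
    rw [div_le_iff₀ (by positivity)]
    calc (n : ℝ) = (n : ℝ) ^ (1 - 1 / (t : ℝ)) * z := by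
          rw [← Real.rpow_add hn0, sub_add_cancel, Real.rpow_one]
      _ ≤ (n : ℝ) ^ (1 - 1 / (t : ℝ)) * (2 * (t + 1) * ⌊z / (t + 1)⌋₊) := by
          gcongr
          rw [div_lt_iff₀ (by positivity)] at hm
          nlinarith
      _ = _ := by ring

end Asymptotics

theorem exists_pos_eventually_exists_graph_choose_le {t : ℕ} (ht : 1 ≤ t) :
    ∃ K > 0, ∀ᶠ n : ℕ in atTop, ∃ G : SimpleGraph (Fin n), domNum G = t + 1 ∧
      (n.choose (t + 1) : ℝ) ≤
        domCount G (t + 1) + K * (n : ℝ) ^ ((t : ℝ) + 1 - 1 / t) := by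
  have htR : (0 : ℝ) < t := by exact_mod_cast ht
  refine ⟨(4 * t * (t + 1)) ^ (t + 1), by positivity, ?_⟩
  filter_upwards [eventually_exists_mul_pow_le_and_div_le_rpow ht] with n ⟨m, hm, hmn, hdiv⟩
  have : NeZero m := ⟨by omega⟩
  obtain ⟨G, hG, hle⟩ := exists_graph_choose_le_domCount_add ht hm hmn
  refine ⟨G, hG, ?_⟩
  have hn0 : (0 : ℝ) < n := by
    exact_mod_cast (Nat.mul_pos t.succ_pos (pow_pos (by omega) t)).trans_le hmn
  set x := (n : ℝ) ^ (1 - 1 / (t : ℝ))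
  have hnx : (n : ℝ) * x ^ (t + 1) = (n : ℝ) ^ ((t : ℝ) + 1 - 1 / t) := by
    have hexp : (t : ℝ) + 1 - 1 / t = 1 + (((t + 1 : ℕ) : ℝ) - (t + 1 : ℕ) / t) := by
      push_cast; field_simp; ring
    rw [hexp, Real.rpow_add hn0, Real.rpow_one, rpow_one_sub_inv_pow hn0.le]
  calc (n.choose (t + 1) : ℝ)
      ≤ domCount G (t + 1) + n * (2 * t * ((n / m : ℕ) : ℝ)) ^ (t + 1) := by
        exact_mod_cast hle
    _ ≤ domCount G (t + 1) + n * (2 * t * (2 * (t + 1) * x)) ^ (t + 1) := by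
        gcongr
        exact Nat.cast_div_le.trans hdiv
    _ = domCount G (t + 1) + (4 * t * (t + 1)) ^ (t + 1) * (n : ℝ) ^ ((t : ℝ) + 1 - 1 / t) := by
        rw [← hnx, show (2 * t * (2 * (t + 1) * x) : ℝ) = 4 * t * (t + 1) * x by ring, mul_pow]
        ring

theorem exists_pos_eventually_domCount_add_le_choose {t : ℕ} (ht : 2 ≤ t) :
    ∃ c > 0, ∀ᶠ n : ℕ in atTop, ∀ G : SimpleGraph (Fin n), domNum G = t + 1 →
      (domCount G (t + 1) : ℝ) + c * (n : ℝ) ^ ((t : ℝ) - 1 / t) ≤ n.choose (t + 1) := by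
  obtain ⟨c, hc, hchoose⟩ := exists_pos_eventually_rpow_le_choose ht
  refine ⟨c, hc, ?_⟩
  filter_upwards [hchoose, eventually_ge_atTop 1] with n hn hn1 G hG
  classical
  have : Nonempty (Fin n) := ⟨⟨0, hn1⟩⟩
  have hmiss := choose_le_card_mul_choose_of_lt_domNum G (k := t) (by omega)
  have hcount := domCount_add_choose_le G (t + 1)
  rw [Fintype.card_fin] at hmiss hcount
  calc (domCount G (t + 1) : ℝ) + c * (n : ℝ) ^ ((t : ℝ) - 1 / t)
      ≤ domCount G (t + 1) + Gᶜ.maxDegree.choose (t + 1) := by gcongr; exact hn _ hmiss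
    _ ≤ n.choose (t + 1) := by exact_mod_cast hcount

theorem bddAbove_domCount (n d k : ℕ) :
    BddAbove {j | ∃ G : SimpleGraph (Fin n), domNum G = d ∧ domCount G k = j} :=
  ⟨n.choose k, by rintro j ⟨G, -, rfl⟩; simpa using domCount_le_choose G k⟩

theorem domCount_le_sSup {n d k : ℕ} {G : SimpleGraph (Fin n)} (hG : domNum G = d) :
    domCount G k ≤ sSup {j | ∃ G : SimpleGraph (Fin n), domNum G = d ∧ domCount G k = j} :=
  le_csSup (bddAbove_domCount n d k) ⟨G, hG, rfl⟩

theorem exists_domCount_eq_sSup {n d k : ℕ} {G₀ : SimpleGraph (Fin n)} (hG₀ : domNum G₀ = d) :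
    ∃ G : SimpleGraph (Fin n), domNum G = d ∧
      domCount G k = sSup {j | ∃ G : SimpleGraph (Fin n), domNum G = d ∧ domCount G k = j} :=
  Nat.sSup_mem (s := {j | ∃ G : SimpleGraph (Fin n), domNum G = d ∧ domCount G k = j})
    ⟨_, G₀, hG₀, rfl⟩ (bddAbove_domCount n d k)

/-- Corollary 3.2: for fixed `γ ≥ 3`, the maximum number `M(n,γ)` of dominating
`γ`-sets over graphs on `n` vertices with domination number `γ` satisfies
`C(n,γ) - O(log^γ n · n^(γ-1/(γ-1))) ≤ M(n,γ) ≤ C(n,γ) - Ω(n^(γ-1-1/(γ-1)))`. -/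
theorem stmt18 (γ : ℕ) (hγ : 3 ≤ γ)
    (M : ℕ → ℕ)
    (hM : ∀ n, M n = sSup {k | ∃ G : SimpleGraph (Fin n),
      domNum G = γ ∧ domCount G γ = k}) :
    (∃ C : ℝ, ∃ N : ℕ, ∀ n : ℕ, N ≤ n →
      (Nat.choose n γ : ℝ) -
          C * Real.log n ^ γ * (n : ℝ) ^ ((γ : ℝ) - 1 / ((γ : ℝ) - 1)) ≤
        (M n : ℝ)) ∧
    (∃ c : ℝ, 0 < c ∧ ∃ N : ℕ, ∀ n : ℕ, N ≤ n →
      (M n : ℝ) ≤ (Nat.choose n γ : ℝ) -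
        c * (n : ℝ) ^ ((γ : ℝ) - 1 - 1 / ((γ : ℝ) - 1))) := by
  obtain ⟨t, rfl⟩ : ∃ t, γ = t + 1 := ⟨γ - 1, by omega⟩
  obtain ⟨K, hK, hlower⟩ := exists_pos_eventually_exists_graph_choose_le (t := t) (by omega)
  obtain ⟨c, hc, hupper⟩ := exists_pos_eventually_domCount_add_le_choose (t := t) (by omega)
  have hlog : ∀ᶠ n : ℕ in atTop, 1 ≤ Real.log n :=
    (Real.tendsto_log_atTop.comp tendsto_natCast_atTop_atTop).eventually_ge_atTop 1
  push_cast
  simp only [add_sub_cancel_right]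
  constructor
  · obtain ⟨N, hN⟩ := eventually_atTop.mp (hlower.and hlog)
    refine ⟨K, N, fun n hn => ?_⟩
    obtain ⟨⟨G, hG, hle⟩, hlogn⟩ := hN n hn
    have hGM : (domCount G (t + 1) : ℝ) ≤ M n := by exact_mod_cast hM n ▸ domCount_le_sSup hG
    have hKlog : K ≤ K * Real.log n ^ (t + 1) :=
      le_mul_of_one_le_right hK.le (one_le_pow₀ hlogn)
    nlinarith [Real.rpow_nonneg (Nat.cast_nonneg n) ((t : ℝ) + 1 - 1 / t)]
  · obtain ⟨N, hN⟩ := eventually_atTop.mp (hlower.and hupper)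
    refine ⟨c, hc, N, fun n hn => ?_⟩
    obtain ⟨⟨G₀, hG₀, -⟩, hup⟩ := hN n hn
    obtain ⟨G, hG, hGM⟩ := exists_domCount_eq_sSup (k := t + 1) hG₀
    rw [← hM n] at hGM
    linarith [hGM ▸ hup G hG]
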